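/- Let n ≥ 1 and i ∈ {1,…,n}. For each j ≠ i, let A_j ⊆ [0,1]^n be a set, each either compact or open in [0,1]^n, which separates the j-th opposite faces of [0,1]^n. Then ⋂_{j ≠ i} A_j connects the i-th opposite faces of [0,1]^n; in particular, if also A_i separates the i-th opposite faces, then ⋂_{j=1}^n A_j ≠ ∅. -/

import Mathlib

def unitCube (n : ℕ) : Set (Fin n → ℝ) := Set.Icc 0 1

def face (n : ℕ) (i : Fin n) (v : ℝ) : Set (Fin n → ℝ) := {x ∈ unitCube n | x i = v}

/-- `A` connects the `i`-th opposite faces of the unit cube: some connected subset of `A`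
meets both faces. -/
def Connects (n : ℕ) (i : Fin n) (A : Set (Fin n → ℝ)) : Prop :=
  ∃ S ⊆ A, IsPreconnected S ∧ (S ∩ face n i 0).Nonempty ∧ (S ∩ face n i 1).Nonempty

/-- `A` separates the `i`-th opposite faces of the unit cube. -/
def Separates (n : ℕ) (i : Fin n) (A : Set (Fin n → ℝ)) : Prop :=
  ¬ Connects n i (unitCube n \ A)

/-- `U` is open in the subspace topology of the unit cube. -/
def OpenInCube (n : ℕ) (U : Set (Fin n → ℝ)) : Prop :=
  ∃ V : Set (Fin n → ℝ), IsOpen V ∧ U = V ∩ unitCube n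

/-!
Kuhn's triangulation of the grid `{0, …, M}ⁿ` carrying a Sperner labelling always has a fully
labelled simplex. Indeed their number is odd: the simplices pair up through their doors (facets
carrying the labels `0, …, n - 1`), except for the doors on the top face `{x (n - 1) = M}`, which
are the fully labelled simplices of one dimension lower. Labelling a grid point `x` by the least
`j` with `x ∈ C₁ j` and `x j > 0`, and passing to the limit `M → ∞`, gives Lebesgue's theorem: if
closed sets `C₀ j ⊇ {x j = 0}` and `C₁ j ⊇ {x j = 1}` cover the cube, some point of the cube lies
in every `C₀ j ∩ C₁ j`.

A set separating the `j`-th faces that is closed, or open in the cube, contains such a partition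
`C₀ j ∩ C₁ j`: split its complement into the points connected to `{x j = 1}` and the others
(closed case), or enclose the two halves of its compact complement in disjoint open sets (open
case). If the compact intersection `K` of partitions `L j ⊆ A j`, `j ≠ i`, did not connect the
`i`-th faces, its complement would contain a partition for `i` as well, and Lebesgue's theorem
would give a point of `K` outside `K`.
-/

namespace Kuhn

open Finset

variable {n : ℕ}

def FullyLabelled (L : Fin (n + 1) → ℕ) : Prop := ∀ m ≤ n, ∃ k, L k = m

/-- With `L` the labels of the vertices of an `n`-simplex, the facet opposite to vertex `k`
carries every label `< n`. -/
def IsDoor (L : Fin (n + 1) → ℕ) (k : Fin (n + 1)) : Prop := ∀ m < n, ∃ k' ≠ k, L k' = m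

section Doors

open scoped Classical

variable {L : Fin (n + 1) → ℕ}

theorem card_isDoor_eq_one (hL : ∀ k, L k ≤ n) (hfull : FullyLabelled L) :
    #{k | IsDoor L k} = 1 := by
  have hsurj : Function.Surjective fun k => (⟨L k, Nat.lt_succ_of_le (hL k)⟩ : Fin (n + 1)) :=
    fun m => (hfull m (Nat.le_of_lt_succ m.2)).imp fun _ hk => Fin.ext hk
  have hinj : Function.Injective L := fun k k' h =>
    Finite.injective_iff_surjective.mpr hsurj (Fin.ext h)
  obtain ⟨k₀, hk₀⟩ := hfull n le_rfl
  refine card_eq_one.mpr ⟨k₀, eq_singleton_iff_unique_mem.mpr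
    ⟨mem_filter.mpr ⟨mem_univ _, fun m hm => ?_⟩, fun k hk => ?_⟩⟩
  · obtain ⟨k, hk⟩ := hfull m hm.le
    exact ⟨k, fun h => by subst h; omega, hk⟩
  · by_contra hne
    have hlt : L k < n := (hL k).lt_of_ne fun h => hne (hinj (h.trans hk₀.symm))
    obtain ⟨k', hk'k, hk'⟩ := (mem_filter.mp hk).2 _ hlt
    exact hk'k (hinj hk')

theorem card_isDoor_eq_zero {m : ℕ} (hm : m < n) (hmiss : ∀ k, L k ≠ m) :
    #{k | IsDoor L k} = 0 :=
  card_eq_zero.mpr (filter_eq_empty_iff.mpr fun _ _ hk =>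
    let ⟨k', _, hk'⟩ := hk m hm
    hmiss k' hk')

theorem card_isDoor_eq_two (hlt : ∀ k, L k < n) (hcov : ∀ m < n, ∃ k, L k = m) :
    #{k | IsDoor L k} = 2 := by
  set L' : Fin (n + 1) → Fin n := fun k => ⟨L k, hlt k⟩
  obtain ⟨k₁, k₂, hne, hL'⟩ := Fintype.exists_ne_map_eq_of_card_lt L' (by simp)
  have h₁₂ : L k₁ = L k₂ := congrArg Fin.val hL'
  have himg : (univ.erase k₁).image L' = univ := by
    refine eq_univ_of_forall fun m => mem_image.mpr ?_
    obtain ⟨k, hk⟩ := hcov m m.2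
    by_cases hk₁ : k = k₁
    · exact ⟨k₂, mem_erase.mpr ⟨hne.symm, mem_univ _⟩, Fin.ext (by simp [L', ← h₁₂, ← hk₁, hk])⟩
    · exact ⟨k, mem_erase.mpr ⟨hk₁, mem_univ _⟩, Fin.ext hk⟩
  have hinj : Set.InjOn L' (univ.erase k₁ : Finset _) := by
    rw [← card_image_iff, himg]
    simp
  refine card_eq_two.mpr ⟨k₁, k₂, hne, ext fun k => ?_⟩
  simp only [mem_filter, mem_univ, true_and, mem_insert, mem_singleton]
  constructor
  · intro hk
    by_contra! hk'
    obtain ⟨k', hk'k, hk'l⟩ := hk (L k) (hlt k)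
    by_cases h : k' = k₁
    · subst h
      exact hk'.2 (hinj (by simp [hk'.1]) (by simp [hne.symm]) (Fin.ext (hk'l.symm.trans h₁₂)))
    · exact hk'k (hinj (by simp [h]) (by simp [hk'.1]) (Fin.ext hk'l))
  · rintro (h | h) m hm <;> obtain ⟨k', hk'⟩ := hcov m hm <;> by_cases hk : k' = k
    · exact ⟨k₂, h ▸ hne.symm, by rw [← h₁₂, ← h, ← hk, hk']⟩
    · exact ⟨k', hk, hk'⟩
    · exact ⟨k₁, h ▸ hne, by rw [h₁₂, ← h, ← hk, hk']⟩
    · exact ⟨k', hk, hk'⟩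

theorem cast_card_isDoor (hL : ∀ k, L k ≤ n) :
    (#{k | IsDoor L k} : ZMod 2) = if FullyLabelled L then 1 else 0 := by
  split_ifs with hfull
  · rw [card_isDoor_eq_one hL hfull, Nat.cast_one]
  by_cases hcov : ∀ m < n, ∃ k, L k = m
  · have hlt : ∀ k, L k < n := fun k => (hL k).lt_of_ne fun h =>
      hfull fun m hm => hm.lt_or_eq.elim (hcov m) fun e => ⟨k, h.trans e.symm⟩
    rw [card_isDoor_eq_two hlt hcov]
    decide
  · push Not at hcov
    obtain ⟨m, hm, hmiss⟩ := hcov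
    rw [card_isDoor_eq_zero hm hmiss, Nat.cast_zero]

end Doors

theorem isDoor_zero_iff {L : Fin (n + 1) → ℕ} :
    IsDoor L 0 ↔ ∀ m < n, ∃ k : Fin n, L k.succ = m := by
  simp [IsDoor, Fin.exists_fin_succ]

theorem isDoor_last_iff {L : Fin (n + 1) → ℕ} :
    IsDoor L (Fin.last n) ↔ ∀ m < n, ∃ k : Fin n, L k.castSucc = m := by
  simp [IsDoor, Fin.exists_fin_succ', Fin.castSucc_ne_last]

theorem isDoor_congr {L L' : Fin (n + 1) → ℕ} {k : Fin (n + 1)} (h : ∀ k' ≠ k, L k' = L' k') :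
    IsDoor L k ↔ IsDoor L' k :=
  forall₂_congr fun _ _ => exists_congr fun k' => and_congr_right fun hk' => by rw [h k' hk']

abbrev Simplex (n : ℕ) := (Fin n → ℤ) × Equiv.Perm (Fin n)

/-- Vertex `k` of the Kuhn simplex `(b, π)` is `b + e (π 0) + ⋯ + e (π (k - 1))`. -/
def vertex (s : Simplex n) (k : Fin (n + 1)) : Fin n → ℤ :=
  fun j => s.1 j + if (s.2.symm j).castSucc < k then 1 else 0

noncomputable def simplices (n : ℕ) (M : ℤ) : Finset (Simplex n) :=
  Fintype.piFinset (fun _ => Finset.Ico 0 M) ×ˢ univ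

theorem mem_simplices {M : ℤ} {s : Simplex n} :
    s ∈ simplices n M ↔ ∀ j, s.1 j ∈ Set.Ico 0 M := by
  simp [simplices, Fintype.mem_piFinset]

theorem vertex_apply_mem_Icc (s : Simplex n) (k : Fin (n + 1)) (j : Fin n) :
    vertex s k j ∈ Set.Icc (s.1 j) (s.1 j + 1) := by
  simp only [vertex, Set.mem_Icc]
  split_ifs <;> omega

theorem vertex_mem_grid {M : ℤ} {s : Simplex n} (hs : s ∈ simplices n M) (k : Fin (n + 1))
    (j : Fin n) : vertex s k j ∈ Set.Icc 0 M := by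
  have := mem_simplices.mp hs j
  have := vertex_apply_mem_Icc s k j
  simp only [Set.mem_Icc, Set.mem_Ico] at *
  omega

theorem vertex_apply_perm (s : Simplex n) (k : Fin (n + 1)) (i : Fin n) :
    vertex s k (s.2 i) = s.1 (s.2 i) + if i.castSucc < k then 1 else 0 := by
  simp [vertex]

variable {m : ℕ}

theorem finRotate_symm_zero : (finRotate (m + 1)).symm 0 = Fin.last m :=
  (Equiv.symm_apply_eq _).mpr finRotate_last.symm

theorem vertex_mul_swap (b : Fin (m + 1) → ℤ) (π : Equiv.Perm (Fin (m + 1))) (u : Fin m)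
    {k : Fin (m + 2)} (hk : k ≠ u.castSucc.succ) :
    vertex (b, π * Equiv.swap u.castSucc u.succ) k = vertex (b, π) k := by
  funext j
  obtain ⟨i, rfl⟩ := π.surjective j
  have hk' : (k : ℕ) ≠ u + 1 := fun h => hk (Fin.ext (by simpa using h))
  simp only [vertex, Equiv.Perm.mul_def, Equiv.symm_trans_apply, Equiv.symm_apply_apply,
    Equiv.symm_swap]
  congr 2
  rcases eq_or_ne i u.castSucc with rfl | h₁
  · simp [Fin.lt_def]; omega
  rcases eq_or_ne i u.succ with rfl | h₂
  · simp [Fin.lt_def]; omega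
  rw [Equiv.swap_apply_of_ne_of_ne h₁ h₂]

theorem vertex_rotate (b : Fin (m + 1) → ℤ) (π : Equiv.Perm (Fin (m + 1))) (k : Fin (m + 1)) :
    vertex (b + Pi.single (π 0) 1, π * finRotate (m + 1)) k.castSucc =
      vertex (b, π) k.succ := by
  funext j
  obtain ⟨i, rfl⟩ := π.surjective j
  simp only [vertex, Equiv.Perm.mul_def, Equiv.symm_trans_apply, Equiv.symm_apply_apply,
    Pi.add_apply, Pi.single_apply, π.injective.eq_iff]
  induction i using Fin.cases with
  | zero =>
    simp [Fin.lt_def]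
    omega
  | succ t =>
    have : (finRotate (m + 1)).symm t.succ = t.castSucc := by
      rw [Equiv.symm_apply_eq]; ext; simp
    simp [this, Fin.lt_def, Fin.succ_ne_zero]

/-- The ordering of `Fin (m + 1)` that starts with `last m` and continues like `ρ`. -/
def liftPerm (ρ : Equiv.Perm (Fin m)) : Equiv.Perm (Fin (m + 1)) :=
  (finSuccEquiv m).trans ((Equiv.optionCongr ρ).trans finSuccEquivLast.symm)

@[simp] theorem liftPerm_zero (ρ : Equiv.Perm (Fin m)) : liftPerm ρ 0 = Fin.last m := by
  simp [liftPerm]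

@[simp] theorem liftPerm_succ (ρ : Equiv.Perm (Fin m)) (i : Fin m) :
    liftPerm ρ i.succ = (ρ i).castSucc := by
  simp [liftPerm]

theorem liftPerm_injective : Function.Injective (liftPerm (m := m)) := fun _ _ h =>
  Equiv.ext fun i => Fin.castSucc_injective m (by simpa using DFunLike.congr_fun h i.succ)

theorem exists_liftPerm_eq {π : Equiv.Perm (Fin (m + 1))} (hπ : π 0 = Fin.last m) :
    ∃ ρ, liftPerm ρ = π := by
  have hne : ∀ i : Fin m, π i.succ ≠ Fin.last m := fun i h =>
    Fin.succ_ne_zero i (π.injective (h.trans hπ.symm))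
  have hinj : Function.Injective fun i : Fin m => (π i.succ).castPred (hne i) := fun i i' h =>
    Fin.succ_injective _ (π.injective (by simpa using congrArg Fin.castSucc h))
  refine ⟨Equiv.ofBijective _ (Finite.injective_iff_bijective.mp hinj), Equiv.ext fun i => ?_⟩
  induction i using Fin.cases with
  | zero => simp [hπ]
  | succ i => simp

theorem vertex_snoc {M : ℤ} (s : Simplex m) (k : Fin (m + 1)) :
    vertex (Fin.snoc s.1 (M - 1), liftPerm s.2) k.succ = Fin.snoc (vertex s k) M := by
  funext j
  induction j using Fin.lastCases with
  | last =>
    have : (liftPerm s.2).symm (Fin.last m) = 0 := by rw [Equiv.symm_apply_eq, liftPerm_zero]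
    simp [vertex, this]
  | cast j =>
    have : (liftPerm s.2).symm j.castSucc = (s.2.symm j).succ := by
      rw [Equiv.symm_apply_eq, liftPerm_succ, Equiv.apply_symm_apply]
    simp [vertex, this, Fin.lt_def]

def labels (ℓ : (Fin n → ℤ) → ℕ) (s : Simplex n) (k : Fin (n + 1)) : ℕ := ℓ (vertex s k)

structure IsSpernerLabelling (M : ℤ) (ℓ : (Fin n → ℤ) → ℕ) : Prop where
  le_dim : ∀ v, (∀ i, v i ∈ Set.Icc 0 M) → ℓ v ≤ n
  ne_of_eq_zero : ∀ v (j : Fin n), (∀ i, v i ∈ Set.Icc 0 M) → v j = 0 → ℓ v ≠ j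
  le_of_eq_top : ∀ v (j : Fin n), (∀ i, v i ∈ Set.Icc 0 M) → v j = M → ℓ v ≤ j

theorem IsSpernerLabelling.snoc {M : ℤ} (hM : 0 ≤ M) {ℓ : (Fin (m + 1) → ℤ) → ℕ}
    (hℓ : IsSpernerLabelling M ℓ) : IsSpernerLabelling M fun w => ℓ (Fin.snoc w M) := by
  have hgrid : ∀ w : Fin m → ℤ, (∀ j, w j ∈ Set.Icc 0 M) →
      ∀ j, (Fin.snoc w M : Fin (m + 1) → ℤ) j ∈ Set.Icc 0 M := fun w hw j => by
    induction j using Fin.lastCases <;> simp [hw, hM]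
  refine ⟨fun w hw => ?_, fun w j hw hj => ?_, fun w j hw hj => ?_⟩
  · simpa using hℓ.le_of_eq_top _ (Fin.last m) (hgrid w hw) (by simp)
  · simpa using hℓ.ne_of_eq_zero _ j.castSucc (hgrid w hw) (by simpa using hj)
  · simpa using hℓ.le_of_eq_top _ j.castSucc (hgrid w hw) (by simpa using hj)

/-- The neighbour of the Kuhn simplex `p.1` across its facet opposite to vertex `p.2`, together
with the index of its own vertex opposite to that facet. -/
def flip (p : Simplex (m + 1) × Fin (m + 2)) : Simplex (m + 1) × Fin (m + 2) :=
  Fin.cases ((p.1.1 + Pi.single (p.1.2 0) 1, p.1.2 * finRotate _), Fin.last _)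
    (Fin.lastCases ((p.1.1 - Pi.single (p.1.2 (Fin.last m)) 1, p.1.2 * (finRotate _)⁻¹), 0)
      fun u => ((p.1.1, p.1.2 * Equiv.swap u.castSucc u.succ), u.castSucc.succ)) p.2

theorem flip_zero (s : Simplex (m + 1)) :
    flip (s, 0) = ((s.1 + Pi.single (s.2 0) 1, s.2 * finRotate _), Fin.last _) := by
  simp [flip]

theorem flip_last (s : Simplex (m + 1)) :
    flip (s, Fin.last _) =
      ((s.1 - Pi.single (s.2 (Fin.last m)) 1, s.2 * (finRotate _)⁻¹), 0) := by
  simp [flip, ← Fin.succ_last]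

theorem flip_castSucc_succ (s : Simplex (m + 1)) (u : Fin m) :
    flip (s, u.castSucc.succ) =
      ((s.1, s.2 * Equiv.swap u.castSucc u.succ), u.castSucc.succ) := by
  simp [flip]

theorem mul_finRotate_inv_apply_zero (π : Equiv.Perm (Fin (m + 1))) :
    (π * (finRotate (m + 1))⁻¹) 0 = π (Fin.last m) := by
  rw [Equiv.Perm.mul_apply, Equiv.Perm.inv_def, finRotate_symm_zero]

theorem flip_flip (p : Simplex (m + 1) × Fin (m + 2)) : flip (flip p) = p := by
  obtain ⟨s, k⟩ := p
  induction k using Fin.cases with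
  | zero => simp [flip_zero, flip_last]
  | succ t =>
    induction t using Fin.lastCases with
    | last => simp [flip_zero, flip_last, mul_finRotate_inv_apply_zero]
    | cast u => simp [flip_castSucc_succ, mul_assoc]

theorem flip_ne (p : Simplex (m + 1) × Fin (m + 2)) : flip p ≠ p := by
  obtain ⟨⟨b, π⟩, k⟩ := p
  induction k using Fin.cases with
  | zero => simp [flip_zero, Fin.ext_iff]
  | succ t =>
    induction t using Fin.lastCases with
    | last => simp [flip_last, Fin.ext_iff]
    | cast u => simp [flip_castSucc_succ, Equiv.swap_eq_one_iff, Fin.ext_iff]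

open scoped Classical in
noncomputable def doorPairs (M : ℤ) (ℓ : (Fin n → ℤ) → ℕ) : Finset (Simplex n × Fin (n + 1)) :=
  {p ∈ simplices n M ×ˢ univ | IsDoor (labels ℓ p.1) p.2}

theorem mem_doorPairs {M : ℤ} {ℓ : (Fin n → ℤ) → ℕ} {p : Simplex n × Fin (n + 1)} :
    p ∈ doorPairs M ℓ ↔ p.1 ∈ simplices n M ∧ IsDoor (labels ℓ p.1) p.2 := by
  simp [doorPairs]

/-- The facet of `p.1` opposite to vertex `p.2` lies in the face `{x (π 0) = M}` of the grid. -/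
def FacetOnTop (M : ℤ) (p : Simplex (m + 1) × Fin (m + 2)) : Prop :=
  p.2 = 0 ∧ p.1.1 (p.1.2 0) + 1 = M

section Flip

variable {M : ℤ} {ℓ : (Fin (m + 1) → ℤ) → ℕ}

theorem pos_of_isDoor_last (hℓ : IsSpernerLabelling M ℓ) {s : Simplex (m + 1)}
    (hs : s ∈ simplices (m + 1) M) (hd : IsDoor (labels ℓ s) (Fin.last _)) :
    0 < s.1 (s.2 (Fin.last m)) := by
  obtain ⟨k, hk⟩ := isDoor_last_iff.mp hd (s.2 (Fin.last m)) (Fin.is_lt _)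
  by_contra! h
  refine hℓ.ne_of_eq_zero _ (s.2 (Fin.last m)) (vertex_mem_grid hs _) ?_ hk
  have := (mem_simplices.mp hs (s.2 (Fin.last m))).1
  simp only [vertex_apply_perm, Fin.lt_def, Fin.val_castSucc, Fin.val_last]
  split_ifs <;> omega

theorem eq_last_of_isDoor_zero (hℓ : IsSpernerLabelling M ℓ) {s : Simplex (m + 1)}
    (hs : s ∈ simplices (m + 1) M) (hd : IsDoor (labels ℓ s) 0) (htop : s.1 (s.2 0) + 1 = M) :
    s.2 0 = Fin.last m := by
  obtain ⟨k, hk⟩ := isDoor_zero_iff.mp hd m (by omega)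
  have := hℓ.le_of_eq_top (vertex s k.succ) (s.2 0) (vertex_mem_grid hs _)
    (by simp [vertex_apply_perm, htop])
  rw [labels] at hk
  exact Fin.ext (by simp only [Fin.val_last]; omega)

theorem isDoor_rotate (ℓ : (Fin (m + 1) → ℤ) → ℕ) (s : Simplex (m + 1)) :
    IsDoor (labels ℓ (s.1 + Pi.single (s.2 0) 1, s.2 * finRotate _)) (Fin.last _) ↔
      IsDoor (labels ℓ s) 0 := by
  simp only [isDoor_last_iff, isDoor_zero_iff, labels, vertex_rotate]

theorem isDoor_mul_swap (ℓ : (Fin (m + 1) → ℤ) → ℕ) (s : Simplex (m + 1)) (u : Fin m) :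
    IsDoor (labels ℓ (s.1, s.2 * Equiv.swap u.castSucc u.succ)) u.castSucc.succ ↔
      IsDoor (labels ℓ s) u.castSucc.succ :=
  isDoor_congr fun _ hk => by simp only [labels, vertex_mul_swap _ _ _ hk]

theorem flip_mem (hℓ : IsSpernerLabelling M ℓ) {p : Simplex (m + 1) × Fin (m + 2)}
    (hp : p ∈ doorPairs M ℓ) (htop : ¬ FacetOnTop M p) :
    flip p ∈ doorPairs M ℓ ∧ ¬ FacetOnTop M (flip p) := by
  obtain ⟨⟨b, π⟩, k⟩ := p
  obtain ⟨hs, hd⟩ := mem_doorPairs.mp hp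
  have hb := mem_simplices.mp hs
  dsimp only at hs hd hb
  induction k using Fin.cases with
  | zero =>
    have htop' : b (π 0) + 1 ≠ M := fun h => htop ⟨rfl, h⟩
    rw [flip_zero, mem_doorPairs]
    refine ⟨⟨mem_simplices.mpr fun j => ?_, (isDoor_rotate ℓ (b, π)).mpr hd⟩,
      fun h => by simp [FacetOnTop, Fin.ext_iff] at h⟩
    have := hb j
    have := hb (π 0)
    simp only [Pi.add_apply, Pi.single_apply, Set.mem_Ico] at *
    split_ifs with h <;> [subst h; skip] <;> omega
  | succ t =>
    induction t using Fin.lastCases with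
    | last =>
      rw [Fin.succ_last] at hd ⊢
      have hpos := pos_of_isDoor_last hℓ hs hd
      have h0 := mul_finRotate_inv_apply_zero π
      rw [flip_last, mem_doorPairs]
      refine ⟨⟨mem_simplices.mpr fun j => ?_, (isDoor_rotate ℓ _).mp ?_⟩, fun h => ?_⟩
      · have := hb j
        simp only [Pi.sub_apply, Pi.single_apply, Set.mem_Ico] at *
        split_ifs with h <;> [subst h; skip] <;> omega
      · simpa [h0] using hd
      · have := (hb (π (Fin.last m))).2
        simp [FacetOnTop, h0] at h
        omega
    | cast u =>
      rw [flip_castSucc_succ, mem_doorPairs]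
      exact ⟨⟨mem_simplices.mpr hb, (isDoor_mul_swap ℓ _ u).mpr hd⟩,
        fun h => Fin.succ_ne_zero u.castSucc h.1⟩

end Flip

section Count

open scoped Classical

theorem cast_card_fullyLabelled_eq_card_doorPairs {M : ℤ} {ℓ : (Fin n → ℤ) → ℕ}
    (hℓ : IsSpernerLabelling M ℓ) :
    (#{s ∈ simplices n M | FullyLabelled (labels ℓ s)} : ZMod 2) = #(doorPairs M ℓ) := by
  rw [doorPairs, card_filter, card_filter, sum_product, Nat.cast_sum, Nat.cast_sum]
  refine sum_congr rfl fun s hs => ?_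
  simpa [Nat.cast_ite] using
    (cast_card_isDoor (L := labels ℓ s) fun k => hℓ.le_dim _ (vertex_mem_grid hs k)).symm

variable {M : ℤ} {ℓ : (Fin (m + 1) → ℤ) → ℕ}

theorem cast_card_doorPairs_eq_card_facetOnTop (hℓ : IsSpernerLabelling M ℓ) :
    (#(doorPairs M ℓ) : ZMod 2) = #{p ∈ doorPairs M ℓ | FacetOnTop M p} := by
  rw [← card_filter_add_card_filter_not (FacetOnTop M), Nat.cast_add, add_eq_left,
    card_eq_sum_ones, Nat.cast_sum]
  refine sum_involution (fun p _ => flip p) (fun _ _ => by decide) (fun p _ _ => flip_ne p)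
    (fun p hp => ?_) (fun p _ => flip_flip p)
  obtain ⟨hp, htop⟩ := mem_filter.mp hp
  exact mem_filter.mpr (flip_mem hℓ hp htop)

theorem isDoor_snoc_zero_iff (s : Simplex m) :
    IsDoor (labels ℓ (Fin.snoc s.1 (M - 1), liftPerm s.2)) 0 ↔
      FullyLabelled (labels (fun w => ℓ (Fin.snoc w M)) s) := by
  simp only [isDoor_zero_iff, labels, vertex_snoc, FullyLabelled, Nat.lt_succ_iff]

theorem card_facetOnTop_eq_card_fullyLabelled (hM : 0 < M) (hℓ : IsSpernerLabelling M ℓ) :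
    #{p ∈ doorPairs M ℓ | FacetOnTop M p} =
      #{s ∈ simplices m M | FullyLabelled (labels (fun w => ℓ (Fin.snoc w M)) s)} := by
  symm
  refine card_nbij (fun s => ((Fin.snoc s.1 (M - 1), liftPerm s.2), 0)) (fun s hs => ?_)
    (fun s _ s' _ h => ?_) (fun p hp => ?_)
  · obtain ⟨hs, hfull⟩ := mem_filter.mp hs
    refine mem_filter.mpr ⟨mem_doorPairs.mpr ⟨mem_simplices.mpr fun j => ?_,
      (isDoor_snoc_zero_iff s).mpr hfull⟩, rfl, by simp⟩
    induction j using Fin.lastCases <;> simp [mem_simplices.mp hs]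
    omega
  · simp only [Prod.mk.injEq, and_true] at h
    exact Prod.ext (Fin.snoc_injective2 h.1).1 (liftPerm_injective h.2)
  · obtain ⟨hp, hk, htop⟩ := mem_filter.mp (mem_coe.mp hp)
    obtain ⟨⟨b, π⟩, k⟩ := p
    obtain ⟨hs, hd⟩ := mem_doorPairs.mp hp
    dsimp only at hk htop hs hd
    subst hk
    obtain ⟨ρ, rfl⟩ := exists_liftPerm_eq (eq_last_of_isDoor_zero hℓ hs hd htop)
    have hb : Fin.snoc (Fin.init b) (M - 1) = b := by
      rw [← Fin.snoc_init_self b]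
      simp [← htop]
    refine ⟨(Fin.init b, ρ), mem_filter.mpr ⟨mem_simplices.mpr fun j => ?_, ?_⟩, by simp [hb]⟩
    · exact mem_simplices.mp hs j.castSucc
    · rw [← isDoor_snoc_zero_iff]
      simpa [hb] using hd

theorem cast_card_fullyLabelled {n : ℕ} {M : ℤ} (hM : 0 < M) {ℓ : (Fin n → ℤ) → ℕ}
    (hℓ : IsSpernerLabelling M ℓ) :
    (#{s ∈ simplices n M | FullyLabelled (labels ℓ s)} : ZMod 2) = 1 := by
  induction n with
  | zero =>
    have hfull : ∀ s : Simplex 0, FullyLabelled (labels ℓ s) := fun s m hm =>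
      ⟨0, by have := hℓ.le_dim (vertex s 0) fun i => i.elim0; simp only [labels]; omega⟩
    simp [hfull, simplices]
  | succ m ih =>
    rw [cast_card_fullyLabelled_eq_card_doorPairs hℓ, cast_card_doorPairs_eq_card_facetOnTop hℓ,
      card_facetOnTop_eq_card_fullyLabelled hM hℓ]
    exact ih (hℓ.snoc hM.le)

end Count

theorem exists_fullyLabelled {M : ℤ} (hM : 0 < M) {ℓ : (Fin n → ℤ) → ℕ}
    (hℓ : IsSpernerLabelling M ℓ) : ∃ s ∈ simplices n M, FullyLabelled (labels ℓ s) := by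
  classical
  by_contra! h
  simpa [filter_false_of_mem h] using cast_card_fullyLabelled hM hℓ

end Kuhn

open Set Metric

theorem exists_isClopen_superset_disjoint {X : Type*} [TopologicalSpace X] [CompactSpace X]
    [T2Space X] {F₀ F₁ : Set X} (hF₀ : IsClosed F₀) (hF₁ : IsClosed F₁)
    (h : ∀ x ∈ F₀, Disjoint (connectedComponent x) F₁) :
    ∃ Q, IsClopen Q ∧ F₀ ⊆ Q ∧ Disjoint Q F₁ := by
  have hloc : ∀ x ∈ F₀, ∃ Q, IsClopen Q ∧ x ∈ Q ∧ Disjoint Q F₁ := by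
    intro x hx
    have hx₁ := h x hx
    rw [connectedComponent_eq_iInter_isClopen] at hx₁
    obtain ⟨t, ht⟩ := hF₁.isCompact.elim_finite_subfamily_closed
      (fun Q : {Q : Set X // IsClopen Q ∧ x ∈ Q} => Q.1) (fun Q => Q.2.1.isClosed)
      hx₁.symm.inter_eq
    refine ⟨⋂ Q ∈ t, Q.1, isClopen_biInter_finset fun Q _ => Q.2.1,
      mem_iInter₂.mpr fun Q _ => Q.2.2, ?_⟩
    rwa [disjoint_comm, disjoint_iff_inter_eq_empty]
  choose! Q hQ using hloc
  obtain ⟨t, ht₀, ht⟩ := hF₀.isCompact.elim_nhds_subcover Q fun x hx =>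
    (hQ x hx).1.isOpen.mem_nhds (hQ x hx).2.1
  exact ⟨⋃ x ∈ t, Q x, isClopen_biUnion_finset fun x hx => (hQ x (ht₀ x hx)).1, ht,
    disjoint_iUnion₂_left.mpr fun x hx => (hQ x (ht₀ x hx)).2.2⟩

theorem IsCompact.exists_isOpen_separating {X : Type*} [TopologicalSpace X] [T2Space X]
    {D F₀ F₁ : Set X} (hD : IsCompact D) (hF₀ : IsCompact F₀) (hF₁ : IsCompact F₁)
    (hF : Disjoint F₀ F₁)
    (h : ∀ S ⊆ D, IsPreconnected S → (S ∩ F₀).Nonempty → (S ∩ F₁).Nonempty → False) :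
    ∃ W₀ W₁, IsOpen W₀ ∧ IsOpen W₁ ∧ Disjoint W₀ W₁ ∧ F₀ ⊆ W₀ ∧ F₁ ⊆ W₁ ∧ D ⊆ W₀ ∪ W₁ := by
  have := isCompact_iff_compactSpace.mp hD
  obtain ⟨Q, hQ, hF₀Q, hQF₁⟩ := exists_isClopen_superset_disjoint (X := D)
    (hF₀.isClosed.preimage continuous_subtype_val) (hF₁.isClosed.preimage continuous_subtype_val)
    fun x hx => disjoint_left.mpr fun y hy hy₁ =>
      h _ (Subtype.coe_image_subset _ _)
        (isPreconnected_connectedComponent.image _ continuous_subtype_val.continuousOn)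
        ⟨x, ⟨x, mem_connectedComponent, rfl⟩, hx⟩ ⟨y, ⟨y, hy, rfl⟩, hy₁⟩
  have hdisj : Disjoint (Subtype.val '' Q ∪ F₀) (Subtype.val '' Qᶜ ∪ F₁) := by
    refine disjoint_union_left.mpr ⟨disjoint_union_right.mpr ⟨?_, ?_⟩,
      disjoint_union_right.mpr ⟨?_, hF⟩⟩
    · exact (disjoint_image_iff Subtype.val_injective).mpr disjoint_compl_right
    · refine disjoint_left.mpr ?_
      rintro _ ⟨q, hq, rfl⟩ hq₁
      exact disjoint_left.mp hQF₁ hq hq₁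
    · refine disjoint_left.mpr ?_
      rintro x hx₀ ⟨q, hq, rfl⟩
      exact hq (hF₀Q hx₀)
  obtain ⟨W₀, W₁, hW₀, hW₁, h₀, h₁, hW⟩ := SeparatedNhds.of_isCompact_isCompact
    ((hQ.isClosed.isCompact.image continuous_subtype_val).union hF₀)
    ((hQ.compl.isClosed.isCompact.image continuous_subtype_val).union hF₁) hdisj
  refine ⟨W₀, W₁, hW₀, hW₁, hW, subset_union_right.trans h₀, subset_union_right.trans h₁,
    fun x hx => ?_⟩
  by_cases hxQ : (⟨x, hx⟩ : D) ∈ Q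
  · exact Or.inl (h₀ (Or.inl ⟨_, hxQ, rfl⟩))
  · exact Or.inr (h₁ (Or.inl ⟨_, hxQ, rfl⟩))

theorem IsCompact.exists_forall_mem_of_infDist_le {X ι : Type*} [PseudoMetricSpace X]
    [Fintype ι] {K : Set X} (hK : IsCompact K) {C : ι → Set X} (hC : ∀ i, IsClosed (C i))
    (hne : ∀ i, (C i).Nonempty) (h : ∀ ε > 0, ∃ x ∈ K, ∀ i, infDist x (C i) ≤ ε) :
    ∃ x ∈ K, ∀ i, x ∈ C i := by
  obtain ⟨x₀, hx₀, -⟩ := h 1 one_pos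
  obtain ⟨a, ha, hmin⟩ := hK.exists_isMinOn ⟨x₀, hx₀⟩
    (continuous_finsetSum Finset.univ fun i _ => continuous_infDist_pt (C i)).continuousOn
  have hsum : ∑ i, infDist a (C i) ≤ 0 := by
    refine le_of_forall_pos_le_add fun ε hε => ?_
    set c : ℝ := (Fintype.card ι : ℝ)
    obtain ⟨x, hx, hxε⟩ := h (ε / (c + 1)) (by positivity)
    calc ∑ i, infDist a (C i) ≤ ∑ i, infDist x (C i) := hmin hx
      _ ≤ ∑ _ : ι, ε / (c + 1) := Finset.sum_le_sum fun i _ => hxε i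
      _ = c / (c + 1) * ε := by rw [Finset.sum_const, Finset.card_univ, nsmul_eq_mul]; ring
      _ ≤ 0 + ε := by
        rw [zero_add]
        exact mul_le_of_le_one_left hε.le ((div_le_one (by positivity)).mpr (by linarith))
  refine ⟨a, ha, fun i => ((hC i).mem_iff_infDist_zero (hne i)).mpr ?_⟩
  exact le_antisymm ((Finset.single_le_sum (fun j _ => infDist_nonneg) (Finset.mem_univ i)).trans
    hsum) infDist_nonneg

section

variable {n : ℕ}

theorem isClosed_unitCube : IsClosed (unitCube n) := isClosed_Icc

theorem isCompact_unitCube : IsCompact (unitCube n) := isCompact_Icc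

theorem isCompact_face (j : Fin n) (v : ℝ) : IsCompact (face n j v) :=
  isCompact_unitCube.inter_right (isClosed_eq (continuous_apply j) continuous_const)

theorem face_nonempty (j : Fin n) {v : ℝ} (hv : v ∈ Icc 0 1) : (face n j v).Nonempty :=
  ⟨fun _ => v, ⟨fun _ => hv.1, fun _ => hv.2⟩, rfl⟩

theorem disjoint_face_zero_one (j : Fin n) : Disjoint (face n j 0) (face n j 1) :=
  disjoint_left.mpr fun _ h₀ h₁ => zero_ne_one (h₀.2.symm.trans h₁.2)

theorem Connects.mono {i : Fin n} {A B : Set (Fin n → ℝ)} (h : Connects n i A) (hAB : A ⊆ B) :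
    Connects n i B :=
  let ⟨S, hSA, hS⟩ := h
  ⟨S, hSA.trans hAB, hS⟩

theorem Connects.inter_nonempty_of_separates {i : Fin n} {B C : Set (Fin n → ℝ)}
    (hC : Connects n i C) (hCc : C ⊆ unitCube n) (hB : Separates n i B) : (C ∩ B).Nonempty := by
  by_contra hCB
  exact hB (hC.mono fun x hx => ⟨hCc hx, fun hxB => hCB ⟨x, hx, hxB⟩⟩)

/-- `A` contains the partition `unitCube n ∩ C₀ ∩ C₁` of the cube between its `j`-th faces. -/
def ContainsPartition (n : ℕ) (j : Fin n) (A : Set (Fin n → ℝ)) : Prop :=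
  ∃ C₀ C₁ : Set (Fin n → ℝ), IsClosed C₀ ∧ IsClosed C₁ ∧ unitCube n ⊆ C₀ ∪ C₁ ∧
    face n j 0 ⊆ C₀ ∧ face n j 1 ⊆ C₁ ∧ unitCube n ∩ (C₀ ∩ C₁) ⊆ A

theorem ContainsPartition.mono {j : Fin n} {A B : Set (Fin n → ℝ)}
    (h : ContainsPartition n j A) (hAB : unitCube n ∩ A ⊆ B) : ContainsPartition n j B :=
  let ⟨C₀, C₁, h₀, h₁, hc, hf₀, hf₁, hA⟩ := h
  ⟨C₀, C₁, h₀, h₁, hc, hf₀, hf₁, fun _ hx => hAB ⟨hx.1, hA hx⟩⟩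

theorem ContainsPartition.exists_isClosed_subset {j : Fin n} {A : Set (Fin n → ℝ)}
    (h : ContainsPartition n j A) : ∃ L ⊆ A, IsClosed L ∧ ContainsPartition n j L :=
  let ⟨C₀, C₁, h₀, h₁, hc, hf₀, hf₁, hA⟩ := h
  ⟨_, hA, isClosed_unitCube.inter (h₀.inter h₁), C₀, C₁, h₀, h₁, hc, hf₀, hf₁, subset_rfl⟩

noncomputable def gridPoint (M : ℤ) (v : Fin n → ℤ) : Fin n → ℝ := fun j => v j / M

theorem gridPoint_mem_unitCube {M : ℤ} (hM : 0 < M) {v : Fin n → ℤ}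
    (hv : ∀ i, v i ∈ Icc 0 M) : gridPoint M v ∈ unitCube n := by
  have hM' : (0 : ℝ) < M := Int.cast_pos.mpr hM
  refine ⟨fun i => div_nonneg (Int.cast_nonneg (hv i).1) hM'.le, fun i => ?_⟩
  exact (div_le_one hM').mpr (by exact_mod_cast (hv i).2)

theorem dist_gridPoint_vertex_le {M : ℤ} (hM : 0 < M) (s : Kuhn.Simplex n) (k : Fin (n + 1)) :
    dist (gridPoint M s.1) (gridPoint M (Kuhn.vertex s k)) ≤ 1 / M := by
  have hM' : (0 : ℝ) < M := Int.cast_pos.mpr hM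
  refine (dist_pi_le_iff (by positivity)).mpr fun j => ?_
  have h := Kuhn.vertex_apply_mem_Icc s k j
  have h₀ : (s.1 j : ℝ) ≤ Kuhn.vertex s k j := Int.cast_le.mpr h.1
  have h₁ : (Kuhn.vertex s k j : ℝ) ≤ s.1 j + 1 := by exact_mod_cast h.2
  simp only [gridPoint]
  rw [Real.dist_eq, ← sub_div, abs_div, abs_of_pos hM']
  exact div_le_div_of_nonneg_right (abs_le.mpr ⟨by linarith, by linarith⟩) hM'.le

noncomputable def leastIndex (P : Fin n → Prop) : ℕ := sInf (insert n (Fin.val '' {j | P j}))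

theorem leastIndex_le (P : Fin n → Prop) : leastIndex P ≤ n :=
  Nat.sInf_le (mem_insert _ _)

theorem leastIndex_le_of {P : Fin n → Prop} {j : Fin n} (h : P j) : leastIndex P ≤ j :=
  Nat.sInf_le (mem_insert_of_mem _ ⟨j, h, rfl⟩)

theorem of_leastIndex_eq {P : Fin n → Prop} {j : Fin n} (h : leastIndex P = j) : P j := by
  have := Nat.sInf_mem (insert_nonempty n (Fin.val '' {j | P j}))
  rw [← leastIndex, h] at this
  obtain h' | ⟨j', hj', hj⟩ := this
  · exact absurd h' j.is_lt.ne
  · exact Fin.ext hj ▸ hj'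

theorem exists_forall_infDist_le {C₀ C₁ : Fin n → Set (Fin n → ℝ)}
    (hcover : ∀ j, unitCube n ⊆ C₀ j ∪ C₁ j) (h₀ : ∀ j, face n j 0 ⊆ C₀ j)
    (h₁ : ∀ j, face n j 1 ⊆ C₁ j) {M : ℤ} (hM : 0 < M) :
    ∃ x ∈ unitCube n, ∀ j, infDist x (C₀ j) ≤ 1 / M ∧ infDist x (C₁ j) ≤ 1 / M := by
  -- Requiring `0 < v j` keeps the label `j` off the face `{x j = 0}`, which `C₁ j` may meet.
  set ℓ : (Fin n → ℤ) → ℕ := fun v => leastIndex fun j => gridPoint M v ∈ C₁ j ∧ 0 < v j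
  have hM' : (0 : ℝ) < M := Int.cast_pos.mpr hM
  have hℓ : Kuhn.IsSpernerLabelling M ℓ := by
    refine ⟨fun v _ => leastIndex_le _, fun v j _ hj h => ?_, fun v j hv hj => ?_⟩
    · exact (of_leastIndex_eq h).2.ne' hj
    · refine leastIndex_le_of ⟨h₁ j ⟨gridPoint_mem_unitCube hM hv, ?_⟩, hj ▸ hM⟩
      simp [gridPoint, hj, hM'.ne']
  obtain ⟨s, hs, hfull⟩ := Kuhn.exists_fullyLabelled hM hℓ
  have hv := Kuhn.vertex_mem_grid hs
  refine ⟨gridPoint M s.1, gridPoint_mem_unitCube hM fun i =>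
    Ico_subset_Icc_self (Kuhn.mem_simplices.mp hs i), fun j => ⟨?_, ?_⟩⟩
  · obtain ⟨k, hk⟩ := hfull n le_rfl
    refine (infDist_le_dist_of_mem ?_).trans (dist_gridPoint_vertex_le hM s k)
    have hk' : ¬ (gridPoint M (Kuhn.vertex s k) ∈ C₁ j ∧ 0 < Kuhn.vertex s k j) := fun h =>
      (hk.symm.trans_le (leastIndex_le_of h)).not_gt j.is_lt
    rcases (hv k j).1.eq_or_lt with h | h
    · refine h₀ j ⟨gridPoint_mem_unitCube hM (hv k), ?_⟩
      simp [gridPoint, ← h]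
    · exact (hcover j (gridPoint_mem_unitCube hM (hv k))).resolve_right fun h' => hk' ⟨h', h⟩
  · obtain ⟨k, hk⟩ := hfull j j.is_lt.le
    exact (infDist_le_dist_of_mem (of_leastIndex_eq hk).1).trans
      (dist_gridPoint_vertex_le hM s k)

theorem exists_mem_unitCube_forall_mem {A : Fin n → Set (Fin n → ℝ)}
    (hA : ∀ j, ContainsPartition n j (A j)) : ∃ x ∈ unitCube n, ∀ j, x ∈ A j := by
  choose C₀ C₁ hC₀ hC₁ hcover h₀ h₁ hA using hA
  have happrox : ∀ ε > 0, ∃ x ∈ unitCube n, ∀ i, infDist x (Sum.elim C₀ C₁ i) ≤ ε := by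
    intro ε hε
    obtain ⟨N, hN⟩ := exists_nat_one_div_lt hε
    obtain ⟨x, hx, hxC⟩ := exists_forall_infDist_le hcover h₀ h₁ (M := N + 1) (by positivity)
    have hN' : 1 / ((N + 1 : ℤ) : ℝ) ≤ ε := by push_cast; exact hN.le
    exact ⟨x, hx, by rintro (j | j); exacts [(hxC j).1.trans hN', (hxC j).2.trans hN']⟩
  obtain ⟨x, hx, hxC⟩ := isCompact_unitCube.exists_forall_mem_of_infDist_le
    (by rintro (j | j); exacts [hC₀ j, hC₁ j])
    (by rintro (j | j); exacts [(face_nonempty j (by simp)).mono (h₀ j),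
      (face_nonempty j (by simp)).mono (h₁ j)]) happrox
  exact ⟨x, hx, fun j => hA j ⟨hx, hxC (.inl j), hxC (.inr j)⟩⟩

theorem containsPartition_compl_of_not_connects {j : Fin n} {D : Set (Fin n → ℝ)}
    (hD : IsCompact D) (h : ¬ Connects n j D) : ContainsPartition n j Dᶜ := by
  obtain ⟨W₀, W₁, hW₀, hW₁, hW, h₀, h₁, hDW⟩ := hD.exists_isOpen_separating (isCompact_face j 0)
    (isCompact_face j 1) (disjoint_face_zero_one j) fun S hS hpre hS₀ hS₁ =>
      h ⟨S, hS, hpre, hS₀, hS₁⟩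
  refine ⟨W₁ᶜ, W₀ᶜ, hW₁.isClosed_compl, hW₀.isClosed_compl, ?_,
    fun x hx => disjoint_left.mp hW (h₀ hx), fun x hx => disjoint_right.mp hW (h₁ hx),
    fun _ ⟨_, hx₁, hx₀⟩ hxD => (hDW hxD).elim hx₀ hx₁⟩
  rw [← compl_inter, hW.symm.inter_eq, compl_empty]
  exact subset_univ _

theorem isClosed_unitCube_diff {A U : Set (Fin n → ℝ)} (hA : IsClosed A)
    (hU : U ⊆ unitCube n \ A) (hsat : ∀ x ∈ U, connectedComponentIn (unitCube n \ A) x ⊆ U) :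
    IsClosed (unitCube n \ U) := by
  refine isOpen_compl_iff.mp (isOpen_iff_mem_nhds.mpr fun x hx => ?_)
  by_cases hxc : x ∈ unitCube n
  · have hxU : x ∈ U := not_not.mp fun h => hx ⟨hxc, h⟩
    obtain ⟨ε, hε, hball⟩ := Metric.isOpen_iff.mp hA.isOpen_compl x (hU hxU).2
    have hT : ball x ε ∩ unitCube n ⊆ U :=
      (((convex_ball x ε).inter (convex_Icc 0 1)).isPreconnected.subset_connectedComponentIn
        (F := unitCube n \ A) ⟨mem_ball_self hε, hxc⟩ fun y hy => ⟨hy.2, hball hy.1⟩).trans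
        (hsat x hxU)
    filter_upwards [ball_mem_nhds x hε] with y hy hyU
    exact hyU.2 (hT ⟨hy, hyU.1⟩)
  · filter_upwards [isClosed_unitCube.isOpen_compl.mem_nhds hxc] with y hy hyU using hy hyU.1

theorem containsPartition_of_isClosed {j : Fin n} {A : Set (Fin n → ℝ)} (hA : IsClosed A)
    (h : Separates n j A) : ContainsPartition n j A := by
  set D := unitCube n \ A
  set R := {x | (connectedComponentIn D x ∩ face n j 1).Nonempty}
  have hRD : R ⊆ D := fun x hx => not_not.mp fun h => by
    simp [R, connectedComponentIn_eq_empty h] at hx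
  have hR : ∀ x ∈ R, connectedComponentIn D x ⊆ R := fun x hx y hy => by
    simpa only [R, mem_ofPred_eq, connectedComponentIn_eq hy] using hx
  have hDR : ∀ x ∈ D \ R, connectedComponentIn D x ⊆ D \ R := fun x hx y hy =>
    ⟨connectedComponentIn_subset _ _ hy, by
      simpa only [R, mem_ofPred_eq, connectedComponentIn_eq hy] using hx.2⟩
  refine ⟨unitCube n \ R, unitCube n \ (D \ R), isClosed_unitCube_diff hA hRD hR,
    isClosed_unitCube_diff hA sdiff_subset hDR, fun x hx => ?_, fun x hx => ⟨hx.1, fun hxR => ?_⟩,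
    fun x hx => ⟨hx.1, fun hxDR => hxDR.2 ⟨x, mem_connectedComponentIn hxDR.1, hx⟩⟩,
    fun x ⟨hx, ⟨_, hxR⟩, _, hxDR⟩ => not_not.mp fun hxA => hxDR ⟨⟨hx, hxA⟩, hxR⟩⟩
  · by_cases hxR : x ∈ R
    · exact Or.inr ⟨hx, fun h => h.2 hxR⟩
    · exact Or.inl ⟨hx, hxR⟩
  · exact h ⟨_, connectedComponentIn_subset _ _, isPreconnected_connectedComponentIn,
      ⟨x, mem_connectedComponentIn (hRD hxR), hx⟩, hxR⟩

theorem containsPartition_of_openInCube {j : Fin n} {A : Set (Fin n → ℝ)}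
    (hA : OpenInCube n A) (h : Separates n j A) : ContainsPartition n j A := by
  obtain ⟨V, hV, rfl⟩ := hA
  have hD : IsCompact (unitCube n \ (V ∩ unitCube n)) := by
    rw [sdiff_inter_self_eq_sdiff]
    exact isCompact_unitCube.diff hV
  exact (containsPartition_compl_of_not_connects hD h).mono fun x ⟨hx, hxD⟩ =>
    not_not.mp fun hxA => hxD ⟨hx, hxA⟩

theorem connects_unitCube_inter_iInter (i : Fin n) {A : Fin n → Set (Fin n → ℝ)}
    (hA : ∀ j ≠ i, ContainsPartition n j (A j)) :
    Connects n i (unitCube n ∩ ⋂ j ∈ {j : Fin n | j ≠ i}, A j) := by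
  have hL : ∀ j, ∃ L, IsClosed L ∧ (j ≠ i → L ⊆ A j ∧ ContainsPartition n j L) := fun j => by
    by_cases hj : j = i
    · exact ⟨univ, isClosed_univ, fun h => (h hj).elim⟩
    · obtain ⟨L, hLA, hL, hLp⟩ := (hA j hj).exists_isClosed_subset
      exact ⟨L, hL, fun _ => ⟨hLA, hLp⟩⟩
  choose L hLc hL using hL
  set K := unitCube n ∩ ⋂ j ∈ {j : Fin n | j ≠ i}, L j
  refine Connects.mono ?_ (inter_subset_inter_right _ (biInter_mono subset_rfl fun j hj =>
    (hL j hj).1))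
  by_contra hK
  have hKc : IsCompact K := isCompact_unitCube.inter_right (isClosed_biInter fun j _ => hLc j)
  obtain ⟨x, hx, hxL⟩ := exists_mem_unitCube_forall_mem (A := fun j => if j = i then Kᶜ else L j)
    fun j => by
      split_ifs with hj
      · exact hj ▸ containsPartition_compl_of_not_connects hKc hK
      · exact (hL j hj).2
  have hxi : x ∉ K := by simpa using hxL i
  exact hxi ⟨hx, mem_iInter₂.mpr fun j (hj : j ≠ i) => by simpa [hj] using hxL j⟩

end

theorem stmt12_general {n : ℕ} (i : Fin n) (A : Fin n → Set (Fin n → ℝ))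
    (hco : ∀ j, j ≠ i → (IsCompact (A j) ∨ OpenInCube n (A j)))
    (hsep : ∀ j, j ≠ i → Separates n j (A j)) :
    Connects n i (⋂ j ∈ {j : Fin n | j ≠ i}, A j) ∧
      (Separates n i (A i) → (⋂ j, A j).Nonempty) := by
  have hconn := connects_unitCube_inter_iInter i fun j hj => (hco j hj).elim
    (fun h => containsPartition_of_isClosed h.isClosed (hsep j hj))
    (fun h => containsPartition_of_openInCube h (hsep j hj))
  refine ⟨hconn.mono inter_subset_right, fun hsepi => ?_⟩
  obtain ⟨x, ⟨-, hxA⟩, hxi⟩ := hconn.inter_nonempty_of_separates inter_subset_left hsepi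
  refine ⟨x, mem_iInter.mpr fun j => ?_⟩
  by_cases hj : j = i
  · exact hj ▸ hxi
  · exact mem_iInter₂.mp hxA j hj

theorem stmt12 {n : ℕ} (i : Fin n) (A : Fin n → Set (Fin n → ℝ))
    (hsub : ∀ j, j ≠ i → A j ⊆ unitCube n)
    (hco : ∀ j, j ≠ i → (IsCompact (A j) ∨ OpenInCube n (A j)))
    (hsep : ∀ j, j ≠ i → Separates n j (A j)) :
    Connects n i (⋂ j ∈ {j : Fin n | j ≠ i}, A j) ∧
      (Separates n i (A i) → (⋂ j, A j).Nonempty) :=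
  stmt12_general i A hco hsep
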